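/- Bernstein inequality (annulus case, lower bound, k = 1): there is a constant C > 0 such that for every λ > 0 and every Schwartz function f : ℝ → ℂ with Fourier transform supported in the annulus {ξ : (3/4)λ ≤ |ξ| ≤ (8/3)λ}, one has ‖f‖_{L^∞} ≤ C λ^{-1} ‖f'‖_{L^∞}. -/

import Mathlib

/-- Fourier transform with the convention ℱf(ξ) = ∫ e^{-ixξ} f(x) dx. -/
noncomputable def ft (f : ℝ → ℂ) (ξ : ℝ) : ℂ :=
  ∫ x : ℝ, Complex.exp (-(Complex.I * x * ξ)) * f x

/-!
Let `χ` be a smooth cutoff that vanishes near the origin and equals `1` on the annulus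
`a ≤ |ξ| ≤ b`. Since differentiation multiplies the Fourier transform by `2πiw`, a Schwartz
function `f` whose `ft f` is supported where `χ = 1` satisfies `𝓕 f = m · 𝓕 f'` for the
Schwartz symbol `m(w) = χ(2πw) / (2πiw)`, hence `f = K ⋆ f'` with `K = 𝓕⁻ m` and
`‖f‖_∞ ≤ ‖K‖_{L¹} ‖f'‖_∞`. Replacing `χ` by `χ(·/λ)` adapts the cutoff to the annulus dilated
by `λ`, and turns the kernel into `t ↦ K(λt)`, whose `L¹` norm is `λ⁻¹ ‖K‖_{L¹}`.
-/

open MeasureTheory Filter Topology Complex Real FourierTransform SchwartzMap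
open scoped ContDiff RealInnerProductSpace Convolution

theorem ContDiff.div_of_eventuallyEq_zero {𝕜 𝕜' E : Type*} [NontriviallyNormedField 𝕜]
    [NormedField 𝕜'] [NormedAlgebra 𝕜 𝕜'] [CompleteSpace 𝕜'] [NormedAddCommGroup E]
    [NormedSpace 𝕜 E] {n : WithTop ℕ∞} {g h : E → 𝕜'} (hg : ContDiff 𝕜 n g)
    (hh : ContDiff 𝕜 n h) (hz : ∀ x, h x = 0 → g =ᶠ[𝓝 x] 0) :
    ContDiff 𝕜 n (fun x => g x / h x) := by
  refine contDiff_iff_contDiffAt.2 fun x => ?_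
  by_cases hx : h x = 0
  · exact (contDiffAt_const (c := (0 : 𝕜'))).congr_of_eventuallyEq <|
      (hz x hx).mono fun y hy => by simp only [hy, Pi.zero_apply, zero_div]
  · simp_rw [div_eq_mul_inv]
    exact hg.contDiffAt.mul (hh.contDiffAt.inv hx)

theorem Real.fourierInv_inv_smul_comp_div {E : Type*} [NormedAddCommGroup E] [NormedSpace ℂ E]
    (φ : ℝ → E) {c : ℝ} (hc : 0 < c) (t : ℝ) :
    𝓕⁻ (fun w => c⁻¹ • φ (w / c)) t = 𝓕⁻ φ (c * t) := by
  simp only [Real.fourierInv_eq, smul_comm _ c⁻¹, integral_smul]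
  rw [show (fun w : ℝ => 𝐞 ⟪w, t⟫ • φ (w / c)) = fun w => 𝐞 ⟪w / c, c * t⟫ • φ (w / c) by
    ext w; congr 2; simp only [RCLike.inner_apply, conj_trivial]; field_simp]
  rw [Measure.integral_comp_div (fun u => 𝐞 ⟪u, c * t⟫ • φ u), abs_of_pos hc,
    inv_smul_smul₀ hc.ne']

theorem norm_convolution_le_integral_norm_mul {G : Type*} [MeasurableSpace G] [Sub G]
    {μ : Measure G} {K g : G → ℂ} (hK : Integrable K μ) {S : ℝ} (hg : ∀ y, ‖g y‖ ≤ S) (x : G) :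
    ‖(K ⋆[ContinuousLinearMap.mul ℂ ℂ, μ] g) x‖ ≤ (∫ t, ‖K t‖ ∂μ) * S := by
  rw [convolution_def, ← integral_mul_const]
  refine norm_integral_le_of_norm_le (hK.norm.mul_const S) (ae_of_all _ fun t => ?_)
  rw [ContinuousLinearMap.mul_apply', norm_mul]
  exact mul_le_mul_of_nonneg_left (hg _) (norm_nonneg _)

theorem SchwartzMap.norm_le_iSup_norm {E F : Type*} [NormedAddCommGroup E] [NormedSpace ℝ E]
    [NormedAddCommGroup F] [NormedSpace ℝ F] (f : 𝓢(E, F)) (x : E) : ‖f x‖ ≤ ⨆ y, ‖f y‖ :=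
  le_ciSup ⟨SchwartzMap.seminorm ℝ 0 0 f, by
    rintro - ⟨y, rfl⟩; exact norm_le_seminorm ℝ f y⟩ x

theorem fourier_eq_ft (f : ℝ → ℂ) (w : ℝ) : 𝓕 f w = ft f (2 * π * w) := by
  rw [Real.fourier_real_eq_integral_exp_smul, ft]
  congr 1 with x
  rw [smul_eq_mul]
  push_cast
  ring_nf

/-- The factor `2π` converts Mathlib's frequency `w` into the frequency `ξ = 2πw` of `ft`. -/
noncomputable def antiderivSymbol (χ : ℝ → ℂ) (w : ℝ) : ℂ := χ (2 * π * w) / (2 * π * I * w)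

noncomputable def antiderivKernel (χ : ℝ → ℂ) : ℝ → ℂ := 𝓕⁻ (antiderivSymbol χ)

theorem antiderivSymbol_mul {χ : ℝ → ℂ} (h0 : χ 0 = 0) (w : ℝ) :
    antiderivSymbol χ w * (2 * π * I * w) = χ (2 * π * w) := by
  rcases eq_or_ne w 0 with rfl | hw
  · simp [h0]
  · exact div_mul_cancel₀ _ (by simp [hw, pi_ne_zero, I_ne_zero])

theorem antiderivSymbol_mul_fourier_deriv {χ : ℝ → ℂ} (h0 : χ 0 = 0) (f : 𝓢(ℝ, ℂ))
    (hf : Function.support (ft f) ⊆ {ξ | χ ξ = 1}) (w : ℝ) :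
    antiderivSymbol χ w * 𝓕 (deriv ⇑f) w = 𝓕 (⇑f) w := by
  have hf' : Integrable (deriv f) := funext (derivCLM_apply ℝ f) ▸ (derivCLM ℝ ℂ f).integrable
  rw [congrFun (Real.fourier_deriv f.integrable f.differentiable hf') w, smul_eq_mul, ← mul_assoc,
    antiderivSymbol_mul h0]
  by_cases hw : 𝓕 (⇑f) w = 0
  · rw [hw, mul_zero]
  · rw [hf (by rwa [Function.mem_support, ← fourier_eq_ft]), one_mul]

theorem antiderivKernel_comp_div (χ : ℝ → ℂ) {c : ℝ} (hc : 0 < c) (t : ℝ) :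
    antiderivKernel (fun ξ => χ (ξ / c)) t = antiderivKernel χ (c * t) := by
  have hsymb : antiderivSymbol (fun ξ => χ (ξ / c)) = fun w => c⁻¹ • antiderivSymbol χ (w / c) := by
    ext w
    simp only [antiderivSymbol, Complex.real_smul]
    have hc' : (c : ℂ) ≠ 0 := ofReal_ne_zero.2 hc.ne'
    push_cast
    field_simp
  rw [antiderivKernel, hsymb, Real.fourierInv_inv_smul_comp_div _ hc, antiderivKernel]

theorem integral_norm_antiderivKernel_comp_div (χ : ℝ → ℂ) {c : ℝ} (hc : 0 < c) :
    ∫ t, ‖antiderivKernel (fun ξ => χ (ξ / c)) t‖ = c⁻¹ * ∫ t, ‖antiderivKernel χ t‖ := by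
  simp_rw [antiderivKernel_comp_div χ hc]
  rw [Measure.integral_comp_mul_left (fun t => ‖antiderivKernel χ t‖), abs_inv, abs_of_pos hc,
    smul_eq_mul]

structure IsAnnularCutoff (χ : ℝ → ℂ) : Prop where
  contDiff : ContDiff ℝ ∞ χ
  hasCompactSupport : HasCompactSupport χ
  eventuallyEq_zero : χ =ᶠ[𝓝 0] 0

namespace IsAnnularCutoff

variable {χ : ℝ → ℂ}

theorem comp_div (hχ : IsAnnularCutoff χ) {c : ℝ} (hc : c ≠ 0) :
    IsAnnularCutoff (fun ξ => χ (ξ / c)) where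
  contDiff := hχ.contDiff.comp (contDiff_id.div_const c)
  hasCompactSupport := by
    simpa only [smul_eq_mul, div_eq_inv_mul] using
      hχ.hasCompactSupport.comp_smul (inv_ne_zero hc)
  eventuallyEq_zero := hχ.eventuallyEq_zero.comp_tendsto <| by
    simpa using (continuous_id.div_const c).tendsto 0

theorem exists_one_on_annulus {a : ℝ} (ha : 0 < a) (b : ℝ) :
    ∃ χ, IsAnnularCutoff χ ∧ ∀ ξ, a ≤ |ξ| → |ξ| ≤ b → χ ξ = 1 := by
  set R := max a b
  have hR : 0 < R := lt_max_of_lt_left ha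
  let inner : ContDiffBump (0 : ℝ) := ⟨a / 2, a, by positivity, by linarith⟩
  let outer : ContDiffBump (0 : ℝ) := ⟨R, 2 * R, hR, by linarith⟩
  refine ⟨fun ξ => ((outer ξ - inner ξ : ℝ) : ℂ), ⟨?_, ?_, ?_⟩, fun ξ haξ hξb => ?_⟩
  · exact ofRealCLM.contDiff.comp (outer.contDiff.sub inner.contDiff)
  · exact (outer.hasCompactSupport.sub inner.hasCompactSupport).comp_left ofReal_zero
  · filter_upwards [Metric.closedBall_mem_nhds (0 : ℝ) (half_pos ha)] with ξ hξ
    have hξR : ξ ∈ Metric.closedBall (0 : ℝ) R :=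
      Metric.closedBall_subset_closedBall (by linarith [le_max_left a b]) hξ
    simp [outer.one_of_mem_closedBall hξR, inner.one_of_mem_closedBall hξ]
  · have hout : outer ξ = 1 := outer.one_of_mem_closedBall <| by
      simpa using show |ξ| ≤ R from hξb.trans (le_max_right a b)
    have hin : inner ξ = 0 := inner.zero_of_le_dist (by simpa using haξ)
    simp [hout, hin]


theorem contDiff_antiderivSymbol (hχ : IsAnnularCutoff χ) :
    ContDiff ℝ ∞ (antiderivSymbol χ) := by
  refine ContDiff.div_of_eventuallyEq_zero (hχ.contDiff.comp (contDiff_const.mul contDiff_id))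
    (contDiff_const.mul ofRealCLM.contDiff) fun w hw => ?_
  obtain rfl : w = 0 := by simpa [pi_ne_zero, I_ne_zero] using hw
  exact hχ.eventuallyEq_zero.comp_tendsto <|
    (continuous_const_mul (2 * π)).tendsto' 0 0 (mul_zero _)

theorem hasCompactSupport_antiderivSymbol (hχ : IsAnnularCutoff χ) :
    HasCompactSupport (antiderivSymbol χ) := by
  refine (hχ.hasCompactSupport.comp_smul (two_pi_pos.ne')).mono fun w hw => ?_
  contrapose! hw
  simp only [antiderivSymbol, Function.notMem_support, smul_eq_mul] at hw ⊢
  rw [hw, zero_div]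

theorem integrable_antiderivKernel (hχ : IsAnnularCutoff χ) : Integrable (antiderivKernel χ) := by
  have := (𝓕⁻ (hχ.hasCompactSupport_antiderivSymbol.toSchwartzMap
    hχ.contDiff_antiderivSymbol)).integrable (μ := volume)
  rwa [fourierInv_coe] at this

theorem eq_antiderivKernel_convolution_deriv (hχ : IsAnnularCutoff χ) (f : 𝓢(ℝ, ℂ))
    (hf : Function.support (ft f) ⊆ {ξ | χ ξ = 1}) :
    ⇑f = antiderivKernel χ ⋆[ContinuousLinearMap.mul ℂ ℂ] deriv f := by
  set m := hχ.hasCompactSupport_antiderivSymbol.toSchwartzMap hχ.contDiff_antiderivSymbol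
  set f' := derivCLM ℝ ℂ f
  have hf' : ⇑f' = deriv f := funext (derivCLM_apply ℝ f)
  have hconv : SchwartzMap.convolution (ContinuousLinearMap.mul ℂ ℂ) (𝓕⁻ m) f' = f := by
    have h𝓕 : (𝓕 (SchwartzMap.convolution (ContinuousLinearMap.mul ℂ ℂ) (𝓕⁻ m) f') : 𝓢(ℝ, ℂ))
        = 𝓕 f := by
      ext w
      rw [fourier_convolution, pairing_apply_apply, fourier_fourierInv_eq, fourier_coe,
        fourier_coe, hf']
      exact antiderivSymbol_mul_fourier_deriv hχ.eventuallyEq_zero.eq_of_nhds f hf w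
    simpa using congrArg 𝓕⁻ h𝓕
  have hK : antiderivKernel χ = ⇑(𝓕⁻ m : 𝓢(ℝ, ℂ)) := (fourierInv_coe m).symm
  rw [hK, ← hf']
  ext x
  rw [← convolution_apply, hconv]

end IsAnnularCutoff

theorem SchwartzMap.exists_norm_le_inv_mul_iSup_norm_deriv {a : ℝ} (ha : 0 < a) (b : ℝ) :
    ∃ C : ℝ, 0 < C ∧ ∀ (lam : ℝ), 0 < lam → ∀ f : 𝓢(ℝ, ℂ),
      Function.support (ft f) ⊆ {ξ : ℝ | a * lam ≤ |ξ| ∧ |ξ| ≤ b * lam} →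
      ∀ x : ℝ, ‖f x‖ ≤ C * lam⁻¹ * ⨆ y : ℝ, ‖deriv (⇑f) y‖ := by
  obtain ⟨χ, hχ, hχ_one⟩ := IsAnnularCutoff.exists_one_on_annulus ha b
  set k := ∫ t, ‖antiderivKernel χ t‖
  refine ⟨k + 1, by positivity, fun lam hlam f hf x => ?_⟩
  set S := ⨆ y, ‖deriv f y‖
  have hχlam := hχ.comp_div hlam.ne'
  have hf_one : Function.support (ft f) ⊆ {ξ | χ (ξ / lam) = 1} := fun ξ hξ => by
    obtain ⟨hlow, hup⟩ := hf hξ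
    refine hχ_one _ ?_ ?_ <;> rw [abs_div, abs_of_pos hlam]
    exacts [(le_div_iff₀ hlam).2 hlow, (div_le_iff₀ hlam).2 hup]
  have hderiv : ∀ y, ‖deriv f y‖ ≤ S := fun y => by
    simpa only [derivCLM_apply] using (derivCLM ℝ ℂ f).norm_le_iSup_norm y
  calc ‖f x‖ ≤ (∫ t, ‖antiderivKernel (fun ξ => χ (ξ / lam)) t‖) * S := by
        rw [hχlam.eq_antiderivKernel_convolution_deriv f hf_one]
        exact norm_convolution_le_integral_norm_mul hχlam.integrable_antiderivKernel hderiv x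
    _ = k * lam⁻¹ * S := by rw [integral_norm_antiderivKernel_comp_div χ hlam, mul_comm lam⁻¹]
    _ ≤ (k + 1) * lam⁻¹ * S := by
        have hS : 0 ≤ S := (norm_nonneg _).trans (hderiv 0)
        gcongr
        linarith

theorem stmt9 :
    ∃ C : ℝ, 0 < C ∧ ∀ (lam : ℝ), 0 < lam → ∀ f : SchwartzMap ℝ ℂ,
      Function.support (ft f) ⊆ {ξ : ℝ | (3/4) * lam ≤ |ξ| ∧ |ξ| ≤ (8/3) * lam} →
      ∀ x : ℝ, ‖f x‖ ≤ C * lam⁻¹ * ⨆ y : ℝ, ‖deriv (⇑f) y‖ :=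
  SchwartzMap.exists_norm_le_inv_mul_iSup_norm_deriv (by norm_num) _
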